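/- arXiv:math/9310211 — 3 statements merged into one kernel-verified Lean document; each statement's English description precedes it below -/
import Mathlib

section
/- Let A₁, A₂, B₁, B₂ be four pairwise distinct propositional atoms. Then the sequent X₁ ⊢ (A₁&A₂)⊗(B₁&B₂) is NOT provable in MALL, where X₁ = [(A₁&A₂)⊗B₁] & [(A₁&A₂)⊗B₂] & [A₁⊗(B₁&B₂)] & [A₂⊗(B₁&B₂)]. -/
/-- Formulas of multiplicative-additive linear logic (MALL), built from
propositional atoms `pos p` and their duals `neg p` by ⊗, ⅋, &, ⊕. -/
inductive Fml where
  | pos : ℕ → Fml            -- atom p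
  | neg : ℕ → Fml            -- dual atom p⊥
  | tens : Fml → Fml → Fml   -- ⊗
  | parr : Fml → Fml → Fml   -- ⅋
  | with_ : Fml → Fml → Fml  -- &
  | plus : Fml → Fml → Fml   -- ⊕

/-- Linear negation, extended by De Morgan duality. -/
def Fml.dual : Fml → Fml
  | pos p => neg p
  | neg p => pos p
  | tens A B => parr A.dual B.dual
  | parr A B => tens A.dual B.dual
  | with_ A B => plus A.dual B.dual
  | plus A B => with_ A.dual B.dual

/-- Provability of one-sided sequents `⊢ Γ`, `Γ` a finite multiset of formulas. -/
inductive Prov : Multiset Fml → Prop where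
  | ax (A : Fml) : Prov {A.dual, A}
  | cut {Γ Δ : Multiset Fml} {A : Fml} :
      Prov (A ::ₘ Γ) → Prov (A.dual ::ₘ Δ) → Prov (Γ + Δ)
  | tens {Γ Δ : Multiset Fml} {A B : Fml} :
      Prov (A ::ₘ Γ) → Prov (B ::ₘ Δ) → Prov (Fml.tens A B ::ₘ (Γ + Δ))
  | parr {Γ : Multiset Fml} {A B : Fml} :
      Prov (A ::ₘ B ::ₘ Γ) → Prov (Fml.parr A B ::ₘ Γ)
  | with_ {Γ : Multiset Fml} {A B : Fml} :
      Prov (A ::ₘ Γ) → Prov (B ::ₘ Γ) → Prov (Fml.with_ A B ::ₘ Γ)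
  | plus₁ {Γ : Multiset Fml} {A B : Fml} :
      Prov (A ::ₘ Γ) → Prov (Fml.plus A B ::ₘ Γ)
  | plus₂ {Γ : Multiset Fml} {A B : Fml} :
      Prov (B ::ₘ Γ) → Prov (Fml.plus A B ::ₘ Γ)

/-- The two-sided sequent `A ⊢ B`, i.e. provability of `⊢ A⊥, B`. -/
def LSeq (A B : Fml) : Prop := Prov {A.dual, B}

open Pointwise

section Phase

variable {M : Type} [CommMonoid M] [Fintype M] [DecidableEq M] (Bot : Finset M)

def pdual (X : Finset M) : Finset M := Finset.univ.filter (fun m => ∀ x ∈ X, x * m ∈ Bot)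

lemma mem_pdual {X : Finset M} {m : M} : m ∈ pdual Bot X ↔ ∀ x ∈ X, x * m ∈ Bot := by
  simp [pdual]

lemma subset_biDual (X : Finset M) : X ⊆ pdual Bot (pdual Bot X) := by
  intro x hx
  rw [mem_pdual]
  intro y hy
  rw [mem_pdual] at hy
  rw [mul_comm]
  exact hy x hx

lemma pdual_anti {X Y : Finset M} (h : X ⊆ Y) : pdual Bot Y ⊆ pdual Bot X := by
  intro m hm
  rw [mem_pdual] at hm ⊢
  exact fun x hx => hm x (h hx)

lemma pdual_triple (X : Finset M) :
    pdual Bot (pdual Bot (pdual Bot X)) = pdual Bot X := by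
  apply Finset.Subset.antisymm
  · exact pdual_anti Bot (subset_biDual Bot X)
  · exact subset_biDual Bot (pdual Bot X)

variable (w : ℕ → Finset M)

def interp : Fml → Finset M
  | .pos p => pdual Bot (w p)
  | .neg p => pdual Bot (pdual Bot (w p))
  | .tens A B => pdual Bot (pdual Bot (interp A * interp B))
  | .parr A B => pdual Bot (pdual Bot (interp A) * pdual Bot (interp B))
  | .with_ A B => interp A ∩ interp B
  | .plus A B => pdual Bot (pdual Bot (interp A ∪ interp B))

lemma interp_fact (A : Fml) :
    pdual Bot (pdual Bot (interp Bot w A)) = interp Bot w A := by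
  induction A with
  | pos p => rw [interp, pdual_triple]
  | neg p => rw [interp]; rw [pdual_triple]
  | tens A B ihA ihB => rw [interp, pdual_triple]
  | parr A B ihA ihB => rw [interp, pdual_triple]
  | with_ A B ihA ihB =>
      rw [interp]
      apply Finset.Subset.antisymm
      · intro x hx
        rw [Finset.mem_inter]
        refine ⟨?_, ?_⟩
        · rw [← ihA]
          exact pdual_anti Bot (pdual_anti Bot Finset.inter_subset_left) hx
        · rw [← ihB]
          exact pdual_anti Bot (pdual_anti Bot Finset.inter_subset_right) hx
      · exact subset_biDual Bot _
  | plus A B ihA ihB => rw [interp, pdual_triple]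

lemma pdual_union (X Y : Finset M) :
    pdual Bot (X ∪ Y) = pdual Bot X ∩ pdual Bot Y := by
  ext m
  simp only [mem_pdual, Finset.mem_inter, Finset.mem_union]
  constructor
  · intro h; exact ⟨fun x hx => h x (Or.inl hx), fun x hx => h x (Or.inr hx)⟩
  · rintro ⟨h1, h2⟩ x (hx | hx)
    · exact h1 x hx
    · exact h2 x hx

lemma interp_dual (A : Fml) :
    interp Bot w A.dual = pdual Bot (interp Bot w A) := by
  induction A with
  | pos p => rfl
  | neg p => rw [Fml.dual, interp, interp, pdual_triple]
  | tens A B ihA ihB =>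
      rw [Fml.dual, interp, interp, ihA, ihB]
      rw [interp_fact, interp_fact, pdual_triple]
  | parr A B ihA ihB =>
      rw [Fml.dual, interp, interp, ihA, ihB]
  | with_ A B ihA ihB =>
      rw [Fml.dual, interp, interp, ihA, ihB, pdual_union, interp_fact, interp_fact]
  | plus A B ihA ihB =>
      rw [Fml.dual, interp, interp, ihA, ihB, pdual_triple, pdual_union]

theorem sound {Γ : Multiset Fml} (h : Prov Γ) :
    (Γ.map (fun A => pdual Bot (interp Bot w A))).prod ⊆ Bot := by
  induction h with
  | ax A =>
      show (Multiset.map _ (A.dual ::ₘ A ::ₘ 0)).prod ⊆ Bot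
      rw [Multiset.map_cons, Multiset.map_cons, Multiset.map_zero,
        Multiset.prod_cons, Multiset.prod_cons, Multiset.prod_zero, mul_one,
        interp_dual, interp_fact]
      intro x hx
      rw [Finset.mem_mul] at hx
      obtain ⟨p, hp, q, hq, rfl⟩ := hx
      rw [mem_pdual] at hq
      exact hq p hp
  | @cut Γ Δ A h1 h2 ih1 ih2 =>
      rw [Multiset.map_cons, Multiset.prod_cons] at ih1 ih2
      rw [interp_dual, interp_fact] at ih2
      rw [Multiset.map_add, Multiset.prod_add]
      intro x hx
      rw [Finset.mem_mul] at hx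
      obtain ⟨p, hp, q, hq, rfl⟩ := hx
      have hpA : p ∈ interp Bot w A := by
        rw [← interp_fact Bot w A, mem_pdual]
        intro a ha
        exact ih1 (Finset.mul_mem_mul ha hp)
      exact ih2 (Finset.mul_mem_mul hpA hq)
  | @tens Γ Δ A B h1 h2 ih1 ih2 =>
      rw [Multiset.map_cons, Multiset.prod_cons] at ih1 ih2
      rw [Multiset.map_cons, Multiset.prod_cons, Multiset.map_add, Multiset.prod_add]
      intro x hx
      rw [Finset.mem_mul] at hx
      obtain ⟨c, hc, m, hm, rfl⟩ := hx
      rw [Finset.mem_mul] at hm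
      obtain ⟨p, hp, q, hq, rfl⟩ := hm
      have hpA : p ∈ interp Bot w A := by
        rw [← interp_fact Bot w A, mem_pdual]
        intro a ha
        exact ih1 (Finset.mul_mem_mul ha hp)
      have hqB : q ∈ interp Bot w B := by
        rw [← interp_fact Bot w B, mem_pdual]
        intro a ha
        exact ih2 (Finset.mul_mem_mul ha hq)
      rw [interp, pdual_triple, mem_pdual] at hc
      have := hc (p * q) (Finset.mul_mem_mul hpA hqB)
      rwa [mul_comm] at this
  | @parr Γ A B h ih =>
      rw [Multiset.map_cons, Multiset.map_cons, Multiset.prod_cons, Multiset.prod_cons] at ih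
      rw [Multiset.map_cons, Multiset.prod_cons]
      intro x hx
      rw [Finset.mem_mul] at hx
      obtain ⟨c, hc, p, hp, rfl⟩ := hx
      have hpd : p ∈ pdual Bot (pdual Bot (interp Bot w A) * pdual Bot (interp Bot w B)) := by
        rw [mem_pdual]
        intro u hu
        rw [Finset.mem_mul] at hu
        obtain ⟨a, ha, b, hb, rfl⟩ := hu
        rw [mul_assoc]
        exact ih (Finset.mul_mem_mul ha (Finset.mul_mem_mul hb hp))
      rw [interp, mem_pdual] at hc
      have := hc p hpd
      rwa [mul_comm] at this
  | @with_ Γ A B h1 h2 ih1 ih2 =>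
      rw [Multiset.map_cons, Multiset.prod_cons] at ih1 ih2
      rw [Multiset.map_cons, Multiset.prod_cons]
      intro x hx
      rw [Finset.mem_mul] at hx
      obtain ⟨c, hc, p, hp, rfl⟩ := hx
      have hpA : p ∈ interp Bot w A := by
        rw [← interp_fact Bot w A, mem_pdual]
        intro a ha
        exact ih1 (Finset.mul_mem_mul ha hp)
      have hpB : p ∈ interp Bot w B := by
        rw [← interp_fact Bot w B, mem_pdual]
        intro a ha
        exact ih2 (Finset.mul_mem_mul ha hp)
      rw [interp, mem_pdual] at hc
      have := hc p (Finset.mem_inter.mpr ⟨hpA, hpB⟩)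
      rwa [mul_comm] at this
  | @plus₁ Γ A B h ih =>
      rw [Multiset.map_cons, Multiset.prod_cons] at ih
      rw [Multiset.map_cons, Multiset.prod_cons]
      intro x hx
      rw [Finset.mem_mul] at hx
      obtain ⟨c, hc, p, hp, rfl⟩ := hx
      rw [interp, pdual_triple] at hc
      have hcA : c ∈ pdual Bot (interp Bot w A) :=
        pdual_anti Bot Finset.subset_union_left hc
      exact ih (Finset.mul_mem_mul hcA hp)
  | @plus₂ Γ A B h ih =>
      rw [Multiset.map_cons, Multiset.prod_cons] at ih
      rw [Multiset.map_cons, Multiset.prod_cons]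
      intro x hx
      rw [Finset.mem_mul] at hx
      obtain ⟨c, hc, p, hp, rfl⟩ := hx
      rw [interp, pdual_triple] at hc
      have hcB : c ∈ pdual Bot (interp Bot w B) :=
        pdual_anti Bot Finset.subset_union_right hc
      exact ih (Finset.mul_mem_mul hcB hp)



end Phase

def Fml.rename (r : ℕ → ℕ) : Fml → Fml
  | pos p => pos (r p)
  | neg p => neg (r p)
  | tens A B => tens (A.rename r) (B.rename r)
  | parr A B => parr (A.rename r) (B.rename r)
  | with_ A B => with_ (A.rename r) (B.rename r)
  | plus A B => plus (A.rename r) (B.rename r)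

lemma Fml.rename_dual (r : ℕ → ℕ) (A : Fml) :
    (A.dual).rename r = (A.rename r).dual := by
  induction A <;> simp [Fml.dual, Fml.rename, *]

lemma prov_rename (r : ℕ → ℕ) {Γ : Multiset Fml} (h : Prov Γ) :
    Prov (Γ.map (Fml.rename r)) := by
  induction h with
  | ax A =>
      have e : ({A.dual, A} : Multiset Fml).map (Fml.rename r)
          = {(A.rename r).dual, A.rename r} := by
        simp [Fml.rename_dual]
      rw [e]
      exact Prov.ax _
  | cut h1 h2 ih1 ih2 =>
      rw [Multiset.map_add]
      rw [Multiset.map_cons] at ih1 ih2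
      rw [Fml.rename_dual] at ih2
      exact Prov.cut ih1 ih2
  | tens h1 h2 ih1 ih2 =>
      rw [Multiset.map_cons, Multiset.map_add]
      rw [Multiset.map_cons] at ih1 ih2
      exact Prov.tens ih1 ih2
  | parr h ih =>
      rw [Multiset.map_cons]
      rw [Multiset.map_cons, Multiset.map_cons] at ih
      exact Prov.parr ih
  | with_ h1 h2 ih1 ih2 =>
      rw [Multiset.map_cons]
      rw [Multiset.map_cons] at ih1 ih2
      exact Prov.with_ ih1 ih2
  | plus₁ h ih =>
      rw [Multiset.map_cons]
      rw [Multiset.map_cons] at ih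
      exact Prov.plus₁ ih
  | plus₂ h ih =>
      rw [Multiset.map_cons]
      rw [Multiset.map_cons] at ih
      exact Prov.plus₂ ih

abbrev M4 := Multiplicative (ZMod 4)

def botM : Finset M4 :=
  {Multiplicative.ofAdd 0, Multiplicative.ofAdd 1, Multiplicative.ofAdd 2}

def wM : ℕ → Finset M4 := fun p =>
  if p = 0 ∨ p = 2 then {Multiplicative.ofAdd 2} else {Multiplicative.ofAdd 0}

def Xc : Fml := Fml.with_ (Fml.with_ (Fml.with_
  (Fml.tens (Fml.with_ (Fml.pos 0) (Fml.pos 1)) (Fml.pos 2))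
  (Fml.tens (Fml.with_ (Fml.pos 0) (Fml.pos 1)) (Fml.pos 3)))
  (Fml.tens (Fml.pos 0) (Fml.with_ (Fml.pos 2) (Fml.pos 3))))
  (Fml.tens (Fml.pos 1) (Fml.with_ (Fml.pos 2) (Fml.pos 3)))

def Gc : Fml := Fml.tens (Fml.with_ (Fml.pos 0) (Fml.pos 1))
  (Fml.with_ (Fml.pos 2) (Fml.pos 3))

theorem not_prov_concrete : ¬ Prov {Xc.dual, Gc} := by
  intro hP
  have hs := sound botM wM hP
  have hmap : (({Xc.dual, Gc} : Multiset Fml).map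
      (fun A => pdual botM (interp botM wM A))).prod
      = pdual botM (interp botM wM Xc.dual) * pdual botM (interp botM wM Gc) := by
    simp
  rw [hmap, interp_dual, interp_fact] at hs
  have hx : (Multiplicative.ofAdd (1 : ZMod 4)) ∈ interp botM wM Xc := by decide
  have hy : (Multiplicative.ofAdd (2 : ZMod 4)) ∈ pdual botM (interp botM wM Gc) := by decide
  have hb := hs (Finset.mul_mem_mul hx hy)
  revert hb
  decide


/-- For pairwise distinct atoms, X₁ ⊢ (A₁&A₂)⊗(B₁&B₂) is NOT provable, where
X₁ = [(A₁&A₂)⊗B₁] & [(A₁&A₂)⊗B₂] & [A₁⊗(B₁&B₂)] & [A₂⊗(B₁&B₂)]. -/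
theorem not_X₁_seq_with_tens_with (a₁ a₂ b₁ b₂ : ℕ)
    (h₁₂ : a₁ ≠ a₂) (h₁₃ : a₁ ≠ b₁) (h₁₄ : a₁ ≠ b₂)
    (h₂₃ : a₂ ≠ b₁) (h₂₄ : a₂ ≠ b₂) (h₃₄ : b₁ ≠ b₂) :
    ¬ LSeq (Fml.with_ (Fml.with_ (Fml.with_
      (Fml.tens (Fml.with_ (Fml.pos a₁) (Fml.pos a₂)) (Fml.pos b₁))
      (Fml.tens (Fml.with_ (Fml.pos a₁) (Fml.pos a₂)) (Fml.pos b₂)))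
      (Fml.tens (Fml.pos a₁) (Fml.with_ (Fml.pos b₁) (Fml.pos b₂))))
      (Fml.tens (Fml.pos a₂) (Fml.with_ (Fml.pos b₁) (Fml.pos b₂))))
      (Fml.tens (Fml.with_ (Fml.pos a₁) (Fml.pos a₂))
        (Fml.with_ (Fml.pos b₁) (Fml.pos b₂))) := by
  intro h
  unfold LSeq at h
  apply not_prov_concrete
  have h2 := prov_rename
    (fun p => if p = a₁ then 0 else if p = a₂ then 1 else if p = b₁ then 2 else 3) h
  have e : ∀ A B : Fml, ({A.dual, B} : Multiset Fml).map
      (Fml.rename (fun p => if p = a₁ then 0 else if p = a₂ then 1 else if p = b₁ then 2 else 3))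
      = {(A.rename (fun p => if p = a₁ then 0 else if p = a₂ then 1 else if p = b₁ then 2 else 3)).dual,
         B.rename (fun p => if p = a₁ then 0 else if p = a₂ then 1 else if p = b₁ then 2 else 3)} := by
    intro A B
    simp [Fml.rename_dual]
  rw [e] at h2
  have hXc : (Fml.with_ (Fml.with_ (Fml.with_
      (Fml.tens (Fml.with_ (Fml.pos a₁) (Fml.pos a₂)) (Fml.pos b₁))
      (Fml.tens (Fml.with_ (Fml.pos a₁) (Fml.pos a₂)) (Fml.pos b₂)))
      (Fml.tens (Fml.pos a₁) (Fml.with_ (Fml.pos b₁) (Fml.pos b₂))))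
      (Fml.tens (Fml.pos a₂) (Fml.with_ (Fml.pos b₁) (Fml.pos b₂)))).rename
      (fun p => if p = a₁ then 0 else if p = a₂ then 1 else if p = b₁ then 2 else 3) = Xc := by
    simp [Fml.rename, Xc, Ne.symm h₁₂, Ne.symm h₁₃, Ne.symm h₁₄, Ne.symm h₂₃,
      Ne.symm h₂₄, Ne.symm h₃₄]
  have hGc : (Fml.tens (Fml.with_ (Fml.pos a₁) (Fml.pos a₂))
      (Fml.with_ (Fml.pos b₁) (Fml.pos b₂))).rename
      (fun p => if p = a₁ then 0 else if p = a₂ then 1 else if p = b₁ then 2 else 3) = Gc := by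
    simp [Fml.rename, Gc, Ne.symm h₁₂, Ne.symm h₁₃, Ne.symm h₁₄, Ne.symm h₂₃,
      Ne.symm h₂₄, Ne.symm h₃₄]
  rwa [hXc, hGc] at h2
end

section
/- Let A₁, A₂, B₁, B₂ be four pairwise distinct propositional atoms. Then the sequent X₂ ⊢ X₁ is NOT provable in MALL, where X₁ = [(A₁&A₂)⊗B₁] & [(A₁&A₂)⊗B₂] & [A₁⊗(B₁&B₂)] & [A₂⊗(B₁&B₂)] and X₂ = (A₁⊗B₁) & (A₂⊗B₁) & (A₁⊗B₂) & (A₂⊗B₂). -/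
open Pointwise

abbrev M2 := Fin 2

/-- The pole of the phase space. -/
def Zot : Finset M2 := {0}

/-- Orthogonal of a set in the phase space over ℤ₂. -/
def orth (X : Finset M2) : Finset M2 := Finset.univ.filter (fun m => ∀ x ∈ X, m + x ∈ Zot)

lemma mem_orth {m : M2} {X : Finset M2} : m ∈ orth X ↔ ∀ x ∈ X, m + x ∈ Zot := by
  simp [orth]

lemma subset_biorth (X : Finset M2) : X ⊆ orth (orth X) := by
  intro x hx
  rw [mem_orth]
  intro k hk
  rw [add_comm]
  exact mem_orth.1 hk x hx

lemma orth_anti {X Y : Finset M2} (h : X ⊆ Y) : orth Y ⊆ orth X := by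
  intro m hm
  rw [mem_orth] at *
  exact fun x hx => hm x (h hx)

lemma triple (X : Finset M2) : orth (orth (orth X)) = orth X :=
  subset_antisymm (orth_anti (subset_biorth X)) (subset_biorth (orth X))

lemma orth_pair {S : Finset M2} {x y : M2} (hx : x ∈ orth S) (hy : y ∈ orth (orth S)) :
    x + y ∈ Zot := by
  rw [add_comm]
  exact mem_orth.1 hy x hx

lemma biorth_add_left (X Y : Finset M2) : orth (orth X) + Y ⊆ orth (orth (X + Y)) := by
  intro m hm
  rw [Finset.mem_add] at hm
  obtain ⟨a, ha, y, hy, rfl⟩ := hm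
  rw [mem_orth]
  intro k hk
  have hyk : y + k ∈ orth X := by
    rw [mem_orth]
    intro x hx
    have h1 := mem_orth.1 hk (x + y) (Finset.add_mem_add hx hy)
    have e : y + k + x = k + (x + y) := by abel
    rwa [e]
  have h2 := mem_orth.1 ha _ hyk
  rwa [add_assoc]

lemma biorth_add (X Y : Finset M2) :
    orth (orth X) + orth (orth Y) ⊆ orth (orth (X + Y)) := by
  have h2 : X + orth (orth Y) ⊆ orth (orth (X + Y)) := by
    rw [add_comm X (orth (orth Y)), add_comm X Y]
    exact biorth_add_left Y X
  intro m hm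
  have h1 := biorth_add_left X (orth (orth Y)) hm
  have h3 := orth_anti (orth_anti h2) h1
  rwa [triple (orth (X + Y))] at h3

lemma orth_biorth_add (X Y : Finset M2) :
    orth (orth (orth X) + orth (orth Y)) = orth (X + Y) := by
  apply subset_antisymm
  · exact orth_anti (Finset.add_subset_add (subset_biorth X) (subset_biorth Y))
  · have h := orth_anti (biorth_add X Y)
    rwa [triple] at h

lemma orth_union (X Y : Finset M2) : orth (X ∪ Y) = orth X ∩ orth Y := by
  ext m
  simp only [Finset.mem_inter, mem_orth, Finset.mem_union]
  constructor
  · intro h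
    exact ⟨fun x hx => h x (Or.inl hx), fun x hx => h x (Or.inr hx)⟩
  · rintro ⟨h1, h2⟩ x (hx | hx)
    exacts [h1 x hx, h2 x hx]

/-- Interpretation of formulas given a valuation. -/
def sem (v : ℕ → Finset M2) : Fml → Finset M2
  | .pos p => v p
  | .neg p => orth (v p)
  | .tens A B => orth (orth (sem v A + sem v B))
  | .parr A B => orth (orth (sem v A) + orth (sem v B))
  | .with_ A B => sem v A ∩ sem v B
  | .plus A B => orth (orth (sem v A ∪ sem v B))

lemma sem_fact (v : ℕ → Finset M2) (hv : ∀ p, orth (orth (v p)) = v p) :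
    ∀ A, orth (orth (sem v A)) = sem v A := by
  intro A
  induction A with
  | pos p => exact hv p
  | neg p => exact triple _
  | tens A B ihA ihB => exact triple _
  | parr A B ihA ihB => exact triple _
  | plus A B ihA ihB => exact triple _
  | with_ A B ihA ihB =>
    have h : sem v A ∩ sem v B = orth (orth (sem v A) ∪ orth (sem v B)) := by
      rw [orth_union, ihA, ihB]
    show orth (orth (sem v A ∩ sem v B)) = _
    rw [h, triple]
    exact h.symm

lemma sem_dual (v : ℕ → Finset M2) (hv : ∀ p, orth (orth (v p)) = v p) :
    ∀ A, sem v A.dual = orth (sem v A) := by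
  intro A
  induction A with
  | pos p => rfl
  | neg p => exact (hv p).symm
  | tens A B ihA ihB =>
    show orth (orth (sem v A.dual) + orth (sem v B.dual)) = orth (orth (orth (sem v A + sem v B)))
    rw [ihA, ihB, orth_biorth_add, triple]
  | parr A B ihA ihB =>
    show orth (orth (sem v A.dual + sem v B.dual)) = _
    rw [ihA, ihB]
    rfl
  | with_ A B ihA ihB =>
    show orth (orth (sem v A.dual ∪ sem v B.dual)) = orth (sem v A ∩ sem v B)
    rw [ihA, ihB]
    have h : sem v A ∩ sem v B = orth (orth (sem v A) ∪ orth (sem v B)) := by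
      rw [orth_union, sem_fact v hv A, sem_fact v hv B]
    rw [h]
  | plus A B ihA ihB =>
    show sem v A.dual ∩ sem v B.dual = orth (orth (orth (sem v A ∪ sem v B)))
    rw [ihA, ihB, ← orth_union, triple]

lemma mem_biorth_of {X T : Finset M2}
    (h : ∀ m ∈ orth X + T, m ∈ Zot) : T ⊆ orth (orth X) := by
  intro g hg
  rw [mem_orth]
  intro k hk
  have h1 := h (k + g) (Finset.add_mem_add hk hg)
  rwa [add_comm] at h1

/-- Soundness of MALL w.r.t. the phase space over ℤ₂. -/
theorem sound_s6 (v : ℕ → Finset M2) (hv : ∀ p, orth (orth (v p)) = v p)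
    {Γ : Multiset Fml} (h : Prov Γ) :
    ∀ m ∈ ((Γ.map (fun A => orth (sem v A))).sum : Finset M2), m ∈ Zot := by
  induction h with
  | ax A =>
    intro m hm
    simp only [Multiset.insert_eq_cons, Multiset.map_cons, Multiset.map_singleton,
      Multiset.sum_cons, Multiset.sum_singleton] at hm
    rw [Finset.mem_add] at hm
    obtain ⟨y, hy, z, hz, rfl⟩ := hm
    rw [sem_dual v hv] at hy
    have h1 := orth_pair hz hy
    rwa [add_comm] at h1
  | cut h1 h2 ih1 ih2 =>
    rename_i Γ Δ A
    rw [Multiset.map_cons, Multiset.sum_cons] at ih1 ih2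
    intro m hm
    rw [Multiset.map_add, Multiset.sum_add, Finset.mem_add] at hm
    obtain ⟨g, hg, d, hd, rfl⟩ := hm
    have hΓ := mem_biorth_of ih1 hg
    rw [sem_dual v hv] at ih2
    exact ih2 _ (Finset.add_mem_add hΓ hd)
  | tens h1 h2 ih1 ih2 =>
    rename_i Γ Δ A B
    rw [Multiset.map_cons, Multiset.sum_cons] at ih1 ih2
    intro m hm
    rw [Multiset.map_cons, Multiset.sum_cons, Multiset.map_add, Multiset.sum_add] at hm
    have e : orth (sem v (Fml.tens A B)) = orth (sem v A + sem v B) := by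
      show orth (orth (orth (sem v A + sem v B))) = _
      rw [triple]
    rw [e, Finset.mem_add] at hm
    obtain ⟨k, hk, z, hz, rfl⟩ := hm
    rw [Finset.mem_add] at hz
    obtain ⟨g, hg, d, hd, rfl⟩ := hz
    have hg' := mem_biorth_of ih1 hg
    have hd' := mem_biorth_of ih2 hd
    have h3 : g + d ∈ orth (orth (sem v A + sem v B)) :=
      biorth_add _ _ (Finset.add_mem_add hg' hd')
    exact orth_pair hk h3
  | parr h1 ih1 =>
    rename_i Γ A B
    rw [Multiset.map_cons, Multiset.map_cons, Multiset.sum_cons, Multiset.sum_cons] at ih1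
    intro m hm
    rw [Multiset.map_cons, Multiset.sum_cons] at hm
    rw [show sem v (Fml.parr A B) = orth (orth (sem v A) + orth (sem v B)) from rfl,
      Finset.mem_add] at hm
    obtain ⟨b, hb, g, hg, rfl⟩ := hm
    have hg' : g ∈ orth (orth (sem v A) + orth (sem v B)) := by
      rw [mem_orth]
      intro t ht
      rw [Finset.mem_add] at ht
      obtain ⟨k1, hk1, k2, hk2, rfl⟩ := ht
      have h2 := ih1 _ (Finset.add_mem_add hk1 (Finset.add_mem_add hk2 hg))
      have h3 : g + (k1 + k2) = k1 + (k2 + g) := by abel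
      rwa [h3]
    have h4 := orth_pair hg' hb
    rwa [add_comm] at h4
  | with_ h1 h2 ih1 ih2 =>
    rename_i Γ A B
    rw [Multiset.map_cons, Multiset.sum_cons] at ih1 ih2
    intro m hm
    rw [Multiset.map_cons, Multiset.sum_cons, Finset.mem_add] at hm
    obtain ⟨k, hk, g, hg, rfl⟩ := hm
    have hA := mem_biorth_of ih1 hg
    have hB := mem_biorth_of ih2 hg
    rw [sem_fact v hv] at hA hB
    have hAB : g ∈ sem v A ∩ sem v B := Finset.mem_inter.2 ⟨hA, hB⟩
    exact mem_orth.1 hk g hAB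
  | plus₁ h1 ih1 =>
    rename_i Γ A B
    rw [Multiset.map_cons, Multiset.sum_cons] at ih1
    intro m hm
    rw [Multiset.map_cons, Multiset.sum_cons] at hm
    have e : orth (sem v (Fml.plus A B)) = orth (sem v A) ∩ orth (sem v B) := by
      show orth (orth (orth (sem v A ∪ sem v B))) = _
      rw [triple, orth_union]
    rw [e, Finset.mem_add] at hm
    obtain ⟨k, hk, g, hg, rfl⟩ := hm
    exact ih1 _ (Finset.add_mem_add (Finset.mem_inter.1 hk).1 hg)
  | plus₂ h1 ih1 =>
    rename_i Γ A B
    rw [Multiset.map_cons, Multiset.sum_cons] at ih1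
    intro m hm
    rw [Multiset.map_cons, Multiset.sum_cons] at hm
    have e : orth (sem v (Fml.plus A B)) = orth (sem v A) ∩ orth (sem v B) := by
      show orth (orth (orth (sem v A ∪ sem v B))) = _
      rw [triple, orth_union]
    rw [e, Finset.mem_add] at hm
    obtain ⟨k, hk, g, hg, rfl⟩ := hm
    exact ih1 _ (Finset.add_mem_add (Finset.mem_inter.1 hk).2 hg)

/-- The countermodel valuation: `a₁ ↦ {0}`, `a₂ ↦ {1}`, everything else `↦ univ`. -/
def Vv (a₁ a₂ : ℕ) : ℕ → Finset M2 :=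
  fun p => orth (if p = a₁ then {0} else if p = a₂ then {1} else ∅)

lemma Vv_fact (a₁ a₂ : ℕ) : ∀ p, orth (orth (Vv a₁ a₂ p)) = Vv a₁ a₂ p :=
  fun _ => triple _

lemma Vv_self₁ (a₁ a₂ : ℕ) : Vv a₁ a₂ a₁ = {0} := by
  show orth (if a₁ = a₁ then {0} else _) = _
  rw [if_pos rfl]
  ext m; fin_cases m <;> decide

lemma Vv_self₂ (a₁ a₂ : ℕ) (h : a₂ ≠ a₁) : Vv a₁ a₂ a₂ = {1} := by
  show orth _ = _
  rw [if_neg h, if_pos rfl]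
  ext m; fin_cases m <;> decide

lemma Vv_other (a₁ a₂ p : ℕ) (h1 : p ≠ a₁) (h2 : p ≠ a₂) : Vv a₁ a₂ p = Finset.univ := by
  show orth _ = _
  rw [if_neg h1, if_neg h2]
  ext m; fin_cases m <;> decide

/-- For pairwise distinct atoms, X₂ ⊢ X₁ is NOT provable, where
X₁ = [(A₁&A₂)⊗B₁] & [(A₁&A₂)⊗B₂] & [A₁⊗(B₁&B₂)] & [A₂⊗(B₁&B₂)] and
X₂ = (A₁⊗B₁) & (A₂⊗B₁) & (A₁⊗B₂) & (A₂⊗B₂). -/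
theorem not_X₂_seq_X₁ (a₁ a₂ b₁ b₂ : ℕ)
    (h₁₂ : a₁ ≠ a₂) (h₁₃ : a₁ ≠ b₁) (h₁₄ : a₁ ≠ b₂)
    (h₂₃ : a₂ ≠ b₁) (h₂₄ : a₂ ≠ b₂) (h₃₄ : b₁ ≠ b₂) :
    ¬ LSeq (Fml.with_ (Fml.with_ (Fml.with_
      (Fml.tens (Fml.pos a₁) (Fml.pos b₁))
      (Fml.tens (Fml.pos a₂) (Fml.pos b₁)))
      (Fml.tens (Fml.pos a₁) (Fml.pos b₂)))
      (Fml.tens (Fml.pos a₂) (Fml.pos b₂)))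
      (Fml.with_ (Fml.with_ (Fml.with_
      (Fml.tens (Fml.with_ (Fml.pos a₁) (Fml.pos a₂)) (Fml.pos b₁))
      (Fml.tens (Fml.with_ (Fml.pos a₁) (Fml.pos a₂)) (Fml.pos b₂)))
      (Fml.tens (Fml.pos a₁) (Fml.with_ (Fml.pos b₁) (Fml.pos b₂))))
      (Fml.tens (Fml.pos a₂) (Fml.with_ (Fml.pos b₁) (Fml.pos b₂)))) := by
  intro hL
  have hv := Vv_fact a₁ a₂
  have key := sound_s6 (Vv a₁ a₂) hv hL
  have e₁ : Vv a₁ a₂ a₁ = {0} := Vv_self₁ a₁ a₂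
  have e₂ : Vv a₁ a₂ a₂ = {1} := Vv_self₂ a₁ a₂ (Ne.symm h₁₂)
  have e₃ : Vv a₁ a₂ b₁ = Finset.univ := Vv_other a₁ a₂ b₁ (Ne.symm h₁₃) (Ne.symm h₂₃)
  have e₄ : Vv a₁ a₂ b₂ = Finset.univ := Vv_other a₁ a₂ b₂ (Ne.symm h₁₄) (Ne.symm h₂₄)
  have sX₂ : sem (Vv a₁ a₂) (Fml.with_ (Fml.with_ (Fml.with_
      (Fml.tens (Fml.pos a₁) (Fml.pos b₁))
      (Fml.tens (Fml.pos a₂) (Fml.pos b₁)))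
      (Fml.tens (Fml.pos a₁) (Fml.pos b₂)))
      (Fml.tens (Fml.pos a₂) (Fml.pos b₂))) = Finset.univ := by
    simp only [sem, e₁, e₂, e₃, e₄]
    ext m; fin_cases m <;> decide
  have sX₁ : sem (Vv a₁ a₂) (Fml.with_ (Fml.with_ (Fml.with_
      (Fml.tens (Fml.with_ (Fml.pos a₁) (Fml.pos a₂)) (Fml.pos b₁))
      (Fml.tens (Fml.with_ (Fml.pos a₁) (Fml.pos a₂)) (Fml.pos b₂)))
      (Fml.tens (Fml.pos a₁) (Fml.with_ (Fml.pos b₁) (Fml.pos b₂))))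
      (Fml.tens (Fml.pos a₂) (Fml.with_ (Fml.pos b₁) (Fml.pos b₂)))) = ∅ := by
    simp only [sem, e₁, e₂, e₃, e₄]
    ext m; fin_cases m <;> decide
  have mem1 := key 1 ?_
  · exact absurd mem1 (by decide)
  · simp only [Multiset.insert_eq_cons, Multiset.map_cons, Multiset.map_singleton,
      Multiset.sum_cons, Multiset.sum_singleton, sem_dual _ hv, sX₂, sX₁]
    decide
end

section
/- In MALL extended by the thinning (weakening) rule (from ⊢ Γ infer ⊢ Γ, C for any formula C) and by the additional axioms ⊢ A⊥⊕A for every formula A, the contraction rule is derivable: for every formula A and every finite multiset Γ, if ⊢ A, A, Γ is provable in the extended system then so is ⊢ A, Γ. -/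
/-- Provability in MALL extended by thinning and the axioms ⊢ A⊥ ⊕ A. -/
inductive ProvE : Multiset Fml → Prop where
  | ax (A : Fml) : ProvE {A.dual, A}
  | cut {Γ Δ : Multiset Fml} {A : Fml} :
      ProvE (A ::ₘ Γ) → ProvE (A.dual ::ₘ Δ) → ProvE (Γ + Δ)
  | tens {Γ Δ : Multiset Fml} {A B : Fml} :
      ProvE (A ::ₘ Γ) → ProvE (B ::ₘ Δ) → ProvE (Fml.tens A B ::ₘ (Γ + Δ))
  | parr {Γ : Multiset Fml} {A B : Fml} :
      ProvE (A ::ₘ B ::ₘ Γ) → ProvE (Fml.parr A B ::ₘ Γ)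
  | with_ {Γ : Multiset Fml} {A B : Fml} :
      ProvE (A ::ₘ Γ) → ProvE (B ::ₘ Γ) → ProvE (Fml.with_ A B ::ₘ Γ)
  | plus₁ {Γ : Multiset Fml} {A B : Fml} :
      ProvE (A ::ₘ Γ) → ProvE (Fml.plus A B ::ₘ Γ)
  | plus₂ {Γ : Multiset Fml} {A B : Fml} :
      ProvE (B ::ₘ Γ) → ProvE (Fml.plus A B ::ₘ Γ)
  | thin {Γ : Multiset Fml} (C : Fml) :
      ProvE Γ → ProvE (C ::ₘ Γ)
  | em (A : Fml) : ProvE {Fml.plus A.dual A}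


lemma Fml.dual_dual (A : Fml) : A.dual.dual = A := by
  induction A <;> simp [Fml.dual, *]

lemma ProvE.thin_multiset (Δ : Multiset Fml) {Γ : Multiset Fml} (h : ProvE Γ) :
    ProvE (Δ + Γ) := by
  induction Δ using Multiset.induction with
  | empty => simpa using h
  | cons C Δ ih => simpa [Multiset.cons_add] using ProvE.thin C ih

/-- In MALL + thinning + the axioms ⊢ A⊥⊕A, contraction is derivable. -/
theorem contraction_derivable (A : Fml) (Γ : Multiset Fml) :
    ProvE (A ::ₘ A ::ₘ Γ) → ProvE (A ::ₘ Γ) := by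
  intro h
  have hax : ProvE (A.dual ::ₘ A ::ₘ Γ) := by
    have := ProvE.thin_multiset Γ (ProvE.ax A)
    have e : Γ + ({A.dual, A} : Multiset Fml) = A.dual ::ₘ A ::ₘ Γ := by
      simp [Multiset.insert_eq_cons, Multiset.add_cons]
      exact add_comm _ _
    rwa [e] at this
  have hw : ProvE (Fml.with_ A A.dual ::ₘ (A ::ₘ Γ)) := ProvE.with_ h hax
  have hdual : (Fml.plus A.dual A).dual = Fml.with_ A A.dual := by
    simp [Fml.dual, Fml.dual_dual]
  have hem : ProvE (Fml.plus A.dual A ::ₘ (0 : Multiset Fml)) := by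
    simpa using ProvE.em A
  have := ProvE.cut hem (hdual ▸ hw)
  simpa using this
end
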